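/- arXiv:1307.4959 — 5 statements merged into one kernel-verified Lean document; each statement's English description precedes it below -/
import Mathlib

section
/- Let G be a finite abelian group, r a positive integer, and ψ : G^r → G a surjective group homomorphism. For functions u_1, ..., u_r : G^{r-1} → [0,1], define the generalized convolution (u_1,...,u_r)*_ψ : G → ℝ by (u_1,...,u_r)*_ψ(x) = E[∏_{i=1}^r u_i(y restricted to coordinates [r]\{i}) | y ∈ G^r, ψ(y) = x]. Then for any two tuples of functions u_1,...,u_r and u'_1,...,u'_r from G^{r-1} to [0,1], the pointwise product (u_1,...,u_r)*_ψ · (u'_1,...,u'_r)*_ψ equals E[(v_{1,z},...,v_{r,z})*_ψ(x) | z ∈ G^r, ψ(z)=0], where v_{i,z}(w) = u_i(w)·u'_i(w + z restricted to [r]\{i}); in particular, the product of two generalized convolutions is a convex combination (average) of generalized convolutions of functions valued in [0,1]. -/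
open Finset

/-- Generalized convolution `(u_1,...,u_r)*_ψ(x) = E[∏_i u_i(y_{[r]\{i}}) | y ∈ G^r, ψ(y) = x]`. -/
noncomputable def genConv {G : Type*} [Fintype G] [AddCommGroup G] [DecidableEq G]
    (r : ℕ) (ψ : (Fin r → G) →+ G)
    (u : (i : Fin r) → ({j : Fin r // j ≠ i} → G) → ℝ) (x : G) : ℝ :=
  (∑ y ∈ Finset.univ.filter (fun y : Fin r → G => ψ y = x),
      ∏ i : Fin r, u i (fun j => y j.1)) /
    ((Finset.univ.filter (fun y : Fin r → G => ψ y = x)).card : ℝ)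

/-! Writing `E_x` for the average over the fibre `ψ⁻¹(x)`, which is the coset `y₀ + ker ψ`,
the product `E_x[F] · E_x[F']` equals `E_{z ∈ ker ψ} E_{y ∈ ψ⁻¹(x)} [F(y) F'(y + z)]`, because
`y + z` runs over the fibre as `z` runs over the kernel. For `F = ∏ᵢ uᵢ(y_{[r]∖{i}})` the
integrand `F(y) F'(y + z)` is the product defining the generalized convolution of the `v_{i,z}`. -/

section Fibers

variable {M N β : Type*} [AddCommGroup M] [Fintype M] [AddCommGroup N] [DecidableEq N]
  [AddCommMonoid β]

theorem AddMonoidHom.sum_fiber_eq_sum_ker_add (ψ : M →+ N) {x : N} {y : M} (hy : ψ y = x)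
    (f : M → β) :
    ∑ y' ∈ univ.filter (fun y' => ψ y' = x), f y' =
      ∑ z ∈ univ.filter (fun z => ψ z = 0), f (y + z) := by
  refine sum_nbij' (· - y) (y + ·) ?_ ?_ ?_ ?_ ?_ <;> intro a ha <;> simp_all

theorem AddMonoidHom.card_fiber_eq_card_ker (ψ : M →+ N) {x : N} {y : M} (hy : ψ y = x) :
    #(univ.filter (fun y' => ψ y' = x)) = #(univ.filter (fun z => ψ z = 0)) := by
  simpa only [card_eq_sum_ones] using ψ.sum_fiber_eq_sum_ker_add hy (fun _ => 1)

end Fibers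

theorem genConv_mul_translate {G : Type*} [Fintype G] [AddCommGroup G] [DecidableEq G]
    (r : ℕ) (ψ : (Fin r → G) →+ G) (u u' : (i : Fin r) → ({j : Fin r // j ≠ i} → G) → ℝ)
    (z : Fin r → G) (x : G) :
    genConv r ψ (fun i w => u i w * u' i (fun j => w j + z j.1)) x =
      (∑ y ∈ univ.filter (fun y : Fin r → G => ψ y = x),
          (∏ i, u i (fun j => y j.1)) * ∏ i, u' i (fun j => (y + z) j.1)) /
        #(univ.filter (fun y : Fin r → G => ψ y = x)) := by
  simp only [genConv, prod_mul_distrib, Pi.add_apply]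

theorem genConv_mul_genConv_general {G : Type*} [Fintype G] [AddCommGroup G] [DecidableEq G]
    (r : ℕ) (ψ : (Fin r → G) →+ G) (hψ : Function.Surjective ψ)
    (u u' : (i : Fin r) → ({j : Fin r // j ≠ i} → G) → ℝ)
    (x : G) :
    genConv r ψ u x * genConv r ψ u' x =
      (∑ z ∈ Finset.univ.filter (fun z : Fin r → G => ψ z = 0),
          genConv r ψ (fun i w => u i w * u' i (fun j => w j + z j.1)) x) /
        ((Finset.univ.filter (fun z : Fin r → G => ψ z = 0)).card : ℝ) := by
  obtain ⟨y₀, hy₀⟩ := hψ x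
  have hcard := ψ.card_fiber_eq_card_ker hy₀
  have hmul_sum : ∀ y ∈ univ.filter (fun y => ψ y = x),
      ∑ z ∈ univ.filter (fun z => ψ z = 0), ∏ i, u' i (fun j => (y + z) j.1) =
        ∑ y' ∈ univ.filter (fun y' => ψ y' = x), ∏ i, u' i (fun j => y' j.1) := fun y hy =>
    (ψ.sum_fiber_eq_sum_ker_add (mem_filter.1 hy).2 (fun y' => ∏ i, u' i (fun j => y' j.1))).symm
  simp only [genConv_mul_translate, ← sum_div, ← hcard]
  rw [sum_comm, sum_congr rfl fun y hy => by rw [← mul_sum, hmul_sum y hy], ← sum_mul]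
  unfold genConv
  have hfiber : (#(univ.filter (fun y => ψ y = x)) : ℝ) ≠ 0 := by
    exact_mod_cast (card_pos.2 ⟨y₀, by simpa using hy₀⟩).ne'
  field_simp

/-- The pointwise product of two generalized convolutions is the average, over `z ∈ G^r` with
`ψ(z) = 0`, of the generalized convolutions of the `[0,1]`-valued functions
`v_{i,z}(w) = u_i(w) · u'_i(w + z_{[r]\{i}})`; in particular it is a convex combination of
generalized convolutions. -/
theorem genConv_mul_genConv {G : Type*} [Fintype G] [AddCommGroup G] [DecidableEq G]
    (r : ℕ) (hr : 0 < r) (ψ : (Fin r → G) →+ G) (hψ : Function.Surjective ψ)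
    (u u' : (i : Fin r) → ({j : Fin r // j ≠ i} → G) → ℝ)
    (hu : ∀ i w, u i w ∈ Set.Icc (0:ℝ) 1) (hu' : ∀ i w, u' i w ∈ Set.Icc (0:ℝ) 1)
    (x : G) :
    genConv r ψ u x * genConv r ψ u' x =
      (∑ z ∈ Finset.univ.filter (fun z : Fin r → G => ψ z = 0),
          genConv r ψ (fun i w => u i w * u' i (fun j => w j + z j.1)) x) /
        ((Finset.univ.filter (fun z : Fin r → G => ψ z = 0)).card : ℝ) :=
  genConv_mul_genConv_general r ψ hψ u u' x
end

section
/- Let G be a finite abelian group, r a positive integer, and ψ : G^r → G a surjective homomorphism. Define the family F of functions G → [0,1] consisting of all convex combinations of generalized convolutions (u_1,...,u_r)*_ψ with u_i : G^{r-1} → [0,1]. Then F is closed under pointwise multiplication. -/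
open Finset

/-- The family `F` of all convex combinations of generalized convolutions
`(u_1,...,u_r)*_ψ` with `u_i : G^{r-1} → [0,1]`. -/
noncomputable def convFam {G : Type*} [Fintype G] [AddCommGroup G] [DecidableEq G]
    (r : ℕ) (ψ : (Fin r → G) →+ G) : Set (G → ℝ) :=
  { φ | ∃ (m : ℕ) (lam : Fin m → ℝ)
      (u : Fin m → (i : Fin r) → ({j : Fin r // j ≠ i} → G) → ℝ),
      (∀ a, 0 ≤ lam a) ∧ (∑ a, lam a = 1) ∧
      (∀ a i w, u a i w ∈ Set.Icc (0:ℝ) 1) ∧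
      φ = fun x => ∑ a, lam a * genConv r ψ (u a) x }

/-!
Substituting `z = y + t` with `t ∈ ker ψ` in the double sum over the fibre `ψ⁻¹(x)` shows that a
product of two generalized convolutions is an average of generalized convolutions:
`(u*_ψ)(x) · (v*_ψ)(x) = E_{t ∈ ker ψ} (w_t*_ψ)(x)` with `w_{t,i}(s) = u_i(s) · v_i(s + t)`,
and `w_t` is again `[0,1]`-valued. So the generalized convolutions multiply into their convex hull
`F`, and by bilinearity of the product so does all of `F`.
-/

theorem mul_mem_convexHull {𝕜 A : Type*} [CommSemiring 𝕜] [PartialOrder 𝕜] [Semiring A]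
    [Algebra 𝕜 A] {s : Set A} (hs : ∀ a ∈ s, ∀ b ∈ s, a * b ∈ convexHull 𝕜 s) {a b : A}
    (ha : a ∈ convexHull 𝕜 s) (hb : b ∈ convexHull 𝕜 s) : a * b ∈ convexHull 𝕜 s := by
  have hs' : ∀ a ∈ s, ∀ b ∈ convexHull 𝕜 s, a * b ∈ convexHull 𝕜 s := fun a ha =>
    convexHull_min (hs a ha) ((convex_convexHull 𝕜 s).linear_preimage (LinearMap.mulLeft 𝕜 a))
  exact convexHull_min (fun a ha => hs' a ha b hb)
    ((convex_convexHull 𝕜 s).linear_preimage (LinearMap.mulRight 𝕜 b)) ha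

theorem AddMonoidHom.sum_fiber_mul_sum_fiber {A B R : Type*} [AddGroup A] [Fintype A]
    [AddGroup B] [DecidableEq B] [CommSemiring R] (ψ : A →+ B) (x : B) (f g : A → R) :
    (∑ y ∈ univ.filter (fun y => ψ y = x), f y) * (∑ z ∈ univ.filter (fun z => ψ z = x), g z)
      = ∑ t ∈ univ.filter (fun t => ψ t = 0),
          ∑ y ∈ univ.filter (fun y => ψ y = x), f y * g (y + t) := by
  rw [sum_mul_sum]
  conv_rhs => rw [sum_comm]
  refine sum_congr rfl fun y hy => ?_
  rw [mem_filter] at hy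
  refine sum_nbij' (fun z => -y + z) (fun t => y + t) ?_ ?_ ?_ ?_ ?_ <;>
    simp +contextual [hy.2]

-- Either the fibre is empty or it is a translate of the kernel.
theorem AddMonoidHom.card_fiber_mul_card_fiber {A B : Type*} [AddGroup A] [Fintype A]
    [AddGroup B] [DecidableEq B] (ψ : A →+ B) (x : B) :
    #(univ.filter (fun y => ψ y = x)) * #(univ.filter (fun y => ψ y = x))
      = #(univ.filter (fun t => ψ t = 0)) * #(univ.filter (fun y => ψ y = x)) := by
  simpa using ψ.sum_fiber_mul_sum_fiber x (fun _ => 1) (fun _ => (1 : ℕ))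

section mulShift

variable {G : Type*} [Add G] {r : ℕ}

def mulShift (u v : (i : Fin r) → ({j : Fin r // j ≠ i} → G) → ℝ) (t : Fin r → G) :
    (i : Fin r) → ({j : Fin r // j ≠ i} → G) → ℝ :=
  fun i s => u i s * v i (fun j => s j + t j)

theorem mulShift_mem_Icc {u v : (i : Fin r) → ({j : Fin r // j ≠ i} → G) → ℝ}
    (hu : ∀ i w, u i w ∈ Set.Icc (0 : ℝ) 1) (hv : ∀ i w, v i w ∈ Set.Icc (0 : ℝ) 1)
    (t : Fin r → G) (i : Fin r) (w : {j : Fin r // j ≠ i} → G) :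
    mulShift u v t i w ∈ Set.Icc (0 : ℝ) 1 :=
  unitInterval.mul_mem (hu i w) (hv i _)

end mulShift

section genConv

variable {G : Type*} [Fintype G] [AddCommGroup G] [DecidableEq G] {r : ℕ}

theorem genConv_mul_genConv_s1 (ψ : (Fin r → G) →+ G)
    (u v : (i : Fin r) → ({j : Fin r // j ≠ i} → G) → ℝ) (x : G) :
    genConv r ψ u x * genConv r ψ v x
      = ∑ t ∈ univ.filter (fun t => ψ t = 0),
          (#(univ.filter (fun t => ψ t = 0)) : ℝ)⁻¹ * genConv r ψ (mulShift u v t) x := by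
  have hcard := congrArg (Nat.cast (R := ℝ)) (ψ.card_fiber_mul_card_fiber x)
  push_cast at hcard
  unfold genConv
  rw [div_mul_div_comm, ψ.sum_fiber_mul_sum_fiber, hcard, sum_div]
  refine sum_congr rfl fun t _ => ?_
  simp only [mulShift, prod_mul_distrib, Pi.add_apply]
  ring

def genConvSet (r : ℕ) (ψ : (Fin r → G) →+ G) : Set (G → ℝ) :=
  genConv r ψ '' {u | ∀ i w, u i w ∈ Set.Icc (0 : ℝ) 1}

theorem convFam_eq_convexHull (ψ : (Fin r → G) →+ G) :
    convFam r ψ = convexHull ℝ (genConvSet r ψ) := by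
  ext φ
  rw [mem_convexHull_iff_exists_fintype]
  constructor
  · rintro ⟨m, lam, u, hlam, hsum, hu, rfl⟩
    refine ⟨Fin m, inferInstance, lam, fun a => genConv r ψ (u a), hlam, hsum,
      fun a => ⟨u a, hu a, rfl⟩, ?_⟩
    ext x
    simp [Finset.sum_apply]
  · rintro ⟨ι, _, w, z, hw, hsum, hz, rfl⟩
    choose u hu hzu using hz
    let e := (Fintype.equivFin ι).symm
    refine ⟨Fintype.card ι, w ∘ e, u ∘ e, fun a => hw _, (e.sum_comp w).trans hsum,
      fun a => hu _, ?_⟩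
    ext x
    simp only [Finset.sum_apply, Pi.smul_apply, smul_eq_mul, ← hzu, Function.comp_apply]
    exact (e.sum_comp fun i => w i * genConv r ψ (u i) x).symm

theorem mul_mem_convexHull_genConvSet (ψ : (Fin r → G) →+ G) :
    ∀ a ∈ genConvSet r ψ, ∀ b ∈ genConvSet r ψ, a * b ∈ convexHull ℝ (genConvSet r ψ) := by
  rintro _ ⟨u, hu, rfl⟩ _ ⟨v, hv, rfl⟩
  set K := univ.filter (fun t => ψ t = 0)
  have hK : (#K : ℝ) ≠ 0 := by
    have : (0 : Fin r → G) ∈ K := by simp [K]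
    exact_mod_cast (card_pos.2 ⟨_, this⟩).ne'
  have hprod : genConv r ψ u * genConv r ψ v
      = ∑ t ∈ K, (#K : ℝ)⁻¹ • genConv r ψ (mulShift u v t) := by
    ext x
    simp [Finset.sum_apply, genConv_mul_genConv_s1, K]
  rw [hprod]
  refine (convex_convexHull ℝ _).sum_mem (fun _ _ => by positivity) ?_
    fun t _ => subset_convexHull ℝ _ ⟨_, mulShift_mem_Icc hu hv t, rfl⟩
  rw [sum_const, nsmul_eq_mul, mul_inv_cancel₀ hK]

end genConv

theorem convFam_mul_mem_general {G : Type*} [Fintype G] [AddCommGroup G] [DecidableEq G]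
    (r : ℕ) (ψ : (Fin r → G) →+ G)
    (φ₁ φ₂ : G → ℝ) (h₁ : φ₁ ∈ convFam r ψ) (h₂ : φ₂ ∈ convFam r ψ) :
    (fun x => φ₁ x * φ₂ x) ∈ convFam r ψ := by
  rw [convFam_eq_convexHull] at *
  exact mul_mem_convexHull (mul_mem_convexHull_genConvSet ψ) h₁ h₂

/-- The family of convex combinations of generalized convolutions is closed under
pointwise multiplication. -/
theorem convFam_mul_mem {G : Type*} [Fintype G] [AddCommGroup G] [DecidableEq G]
    (r : ℕ) (hr : 0 < r) (ψ : (Fin r → G) →+ G) (hψ : Function.Surjective ψ)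
    (φ₁ φ₂ : G → ℝ) (h₁ : φ₁ ∈ convFam r ψ) (h₂ : φ₂ ∈ convFam r ψ) :
    (fun x => φ₁ x * φ₂ x) ∈ convFam r ψ :=
  convFam_mul_mem_general r ψ φ₁ φ₂ h₁ h₂
end

section
/- Let G be a finite abelian group, r ≥ 1, and ψ : G^r → G a surjective homomorphism. For any function ν : G → ℝ and any u_1,...,u_r : G^{r-1} → [0,1], one has |E[(ν(ψ(x)) − 1) ∏_{i=1}^r u_i(x_{[r]\{i}}) | x ∈ G^r]| ≤ (E[∏_{ω∈{0,1}^r} (ν(ψ(x^{(ω)})) − 1) | x^{(0)}, x^{(1)} ∈ G^r])^{1/2^r}, where x^{(ω)} ∈ G^r has i-th coordinate equal to the i-th coordinate of x^{(ω_i)}. -/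
open Finset

section GCS
variable {G : Type*} [Fintype G] {r : ℕ}

/-- `Y x ω` is the vector whose `i`-th coordinate is `x i (ω i)`. -/
def GCS.Y (x : Fin r → Bool → G) (ω : Fin r → Bool) : Fin r → G := fun i => x i (ω i)

/-- Cube vertices that are `false` from coordinate `k` on. -/
def GCS.Om (r k : ℕ) : Finset (Fin r → Bool) :=
  Finset.univ.filter fun ω => ∀ i : Fin r, k ≤ (i : ℕ) → ω i = false

/-- Indices `≥ k`. -/
def GCS.Hi (r k : ℕ) : Finset (Fin r) := Finset.univ.filter fun i => k ≤ (i : ℕ)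

variable (f : (Fin r → G) → ℝ) (u : (i : Fin r) → ({j : Fin r // j ≠ i} → G) → ℝ)

/-- The quantity after `k` applications of Cauchy–Schwarz (as a sum, not average). -/
def GCS.P (k : ℕ) (x : Fin r → Bool → G) : ℝ :=
  ∏ ω ∈ GCS.Om r k, (f (GCS.Y x ω) * ∏ i ∈ GCS.Hi r k, u i fun j => GCS.Y x ω j.1)

/-- Update slot `(i₀, b)` of `x` to `t`. -/
def GCS.updX (x : Fin r → Bool → G) (i₀ : Fin r) (b : Bool) (t : G) : Fin r → Bool → G :=
  Function.update x i₀ (Function.update (x i₀) b t)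

namespace GCS

lemma mem_Om {k : ℕ} {ω : Fin r → Bool} : ω ∈ Om r k ↔ ∀ i : Fin r, k ≤ (i:ℕ) → ω i = false := by
  simp [Om]

lemma updX_same (x : Fin r → Bool → G) (i₀ : Fin r) (b : Bool) (t : G) :
    updX x i₀ b t i₀ b = t := by simp [updX]

lemma updX_updX (x : Fin r → Bool → G) (i₀ : Fin r) (b : Bool) (t t' : G) :
    updX (updX x i₀ b t) i₀ b t' = updX x i₀ b t' := by
  simp [updX, Function.update_idem]

lemma Y_updX_ne (x : Fin r → Bool → G) (i₀ : Fin r) (b : Bool) (t : G)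
    {ω : Fin r → Bool} (h : ω i₀ ≠ b) : Y (updX x i₀ b t) ω = Y x ω := by
  funext j
  rcases eq_or_ne j i₀ with rfl | hj
  · simp [Y, updX, Function.update_of_ne h]
  · simp [Y, updX, Function.update_of_ne hj]

lemma Y_updX_apply_ne (x : Fin r → Bool → G) (i₀ : Fin r) (b : Bool) (t : G)
    (ω : Fin r → Bool) {j : Fin r} (hj : j ≠ i₀) :
    Y (updX x i₀ b t) ω j = Y x ω j := by
  simp [Y, updX, Function.update_of_ne hj]

lemma updX_eq_self (x : Fin r → Bool → G) (i₀ : Fin r) (b : Bool) :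
    updX x i₀ b (x i₀ b) = x := by
  simp [updX, Function.update_eq_self]

/-- the self-inverse slot-update equivalence -/
def updEquiv (i₀ : Fin r) (b : Bool) : ((Fin r → Bool → G) × G) ≃ ((Fin r → Bool → G) × G) where
  toFun p := (updX p.1 i₀ b p.2, p.1 i₀ b)
  invFun p := (updX p.1 i₀ b p.2, p.1 i₀ b)
  left_inv p := by
    obtain ⟨x, t⟩ := p
    show (updX (updX x i₀ b t) i₀ b (x i₀ b), updX x i₀ b t i₀ b) = (x, t)
    rw [updX_updX, updX_same, updX_eq_self]
  right_inv p := by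
    obtain ⟨x, t⟩ := p
    show (updX (updX x i₀ b t) i₀ b (x i₀ b), updX x i₀ b t i₀ b) = (x, t)
    rw [updX_updX, updX_same, updX_eq_self]

/-- key sum-update lemma -/
lemma sum_updX (i₀ : Fin r) (b : Bool) (F : (Fin r → Bool → G) → ℝ) :
    ∑ x : Fin r → Bool → G, ∑ t : G, F (updX x i₀ b t)
      = (Fintype.card G : ℝ) * ∑ x : Fin r → Bool → G, F x := by
  classical
  calc ∑ x : Fin r → Bool → G, ∑ t : G, F (updX x i₀ b t)
      = ∑ p : (Fin r → Bool → G) × G, F (updX p.1 i₀ b p.2) := by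
        rw [Fintype.sum_prod_type]
    _ = ∑ p : (Fin r → Bool → G) × G, F p.1 :=
        Equiv.sum_comp (updEquiv i₀ b) fun p => F p.1
    _ = (Fintype.card G : ℝ) * ∑ x : Fin r → Bool → G, F x := by
        rw [Fintype.sum_prod_type]
        simp [Finset.sum_const, mul_comm, Finset.mul_sum]


/-- the `ω`-product with coordinate `i₀` set to `b`, carrying the `u i` factors for `i ≥ k+1`. -/
def gfun (k : ℕ) (i₀ : Fin r) (b : Bool) (x : Fin r → Bool → G) : ℝ :=
  ∏ ω ∈ Om r k, (f (Y x (Function.update ω i₀ b)) *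
    ∏ i ∈ Hi r (k+1), u i fun j => Y x (Function.update ω i₀ b) j.1)

/-- the product of the `u i₀` factors. -/
def Ufun (k : ℕ) (i₀ : Fin r) (x : Fin r → Bool → G) : ℝ :=
  ∏ ω ∈ Om r k, u i₀ fun j => Y x ω j.1

variable {k : ℕ} {i₀ : Fin r}

lemma Om_false (hi₀ : (i₀ : ℕ) = k) {ω : Fin r → Bool} (hω : ω ∈ Om r k) : ω i₀ = false :=
  (mem_Om.1 hω) i₀ (le_of_eq hi₀.symm)

lemma Om_update_self (hi₀ : (i₀ : ℕ) = k) {ω : Fin r → Bool} (hω : ω ∈ Om r k) :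
    Function.update ω i₀ false = ω := by
  rw [← Om_false hi₀ hω, Function.update_eq_self]

lemma not_mem_Hi (hi₀ : (i₀ : ℕ) = k) : i₀ ∉ Hi r (k+1) := by simp [Hi, hi₀]

lemma Hi_insert (hi₀ : (i₀ : ℕ) = k) : Hi r k = insert i₀ (Hi r (k+1)) := by
  ext i
  simp only [Hi, mem_filter, mem_univ, true_and, mem_insert]
  constructor
  · intro h
    rcases eq_or_lt_of_le h with h' | h'
    · exact Or.inl (Fin.ext (by omega))
    · exact Or.inr (by omega)
  · rintro (rfl | h) <;> omega

/-- Claim A : `P k = U * g false`. -/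
lemma P_eq_U_mul_g (hi₀ : (i₀ : ℕ) = k) (x : Fin r → Bool → G) :
    P f u k x = Ufun u k i₀ x * gfun f u k i₀ false x := by
  rw [P, Ufun, gfun, ← Finset.prod_mul_distrib]
  refine Finset.prod_congr rfl fun ω hω => ?_
  rw [Om_update_self hi₀ hω, Hi_insert hi₀, Finset.prod_insert (not_mem_Hi hi₀)]
  ring

/-- Claim B : `P (k+1) = g false * g true`. -/
lemma P_succ_eq_g_mul_g (hi₀ : (i₀ : ℕ) = k) (x : Fin r → Bool → G) :
    P f u (k+1) x = gfun f u k i₀ false x * gfun f u k i₀ true x := by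
  have key : P f u (k+1) x
      = ∏ p ∈ (Om r k) ×ˢ (Finset.univ : Finset Bool),
          (f (Y x (Function.update p.1 i₀ p.2)) *
            ∏ i ∈ Hi r (k+1), u i fun j => Y x (Function.update p.1 i₀ p.2) j.1) := by
    rw [P]
    refine Finset.prod_nbij' (fun ω => (Function.update ω i₀ false, ω i₀))
      (fun p => Function.update p.1 i₀ p.2) ?_ ?_ ?_ ?_ ?_
    · intro ω hω
      rw [Finset.mem_product]
      refine ⟨mem_Om.2 fun i hi => ?_, Finset.mem_univ _⟩
      rcases eq_or_ne i i₀ with rfl | hne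
      · simp
      · simp only [Function.update_of_ne hne]
        exact mem_Om.1 hω i (by omega)
    · intro p hp
      rw [Finset.mem_product] at hp
      refine mem_Om.2 fun i hi => ?_
      have hne : i ≠ i₀ := fun h => by subst h; omega
      simp only [Function.update_of_ne hne]
      exact mem_Om.1 hp.1 i (by omega)
    · intro ω hω
      show Function.update (Function.update ω i₀ false) i₀ (ω i₀) = ω
      rw [Function.update_idem, Function.update_eq_self]
    · intro p hp
      rw [Finset.mem_product] at hp
      show (Function.update (Function.update p.1 i₀ p.2) i₀ false,
        Function.update p.1 i₀ p.2 i₀) = p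
      rw [Function.update_idem, Om_update_self hi₀ hp.1, Function.update_self]
    · intro ω hω
      have h2 : Function.update (Function.update ω i₀ false) i₀ (ω i₀) = ω := by
        rw [Function.update_idem, Function.update_eq_self]
      simp only [h2]
  rw [key, Finset.prod_product, gfun, gfun, ← Finset.prod_mul_distrib]
  refine Finset.prod_congr rfl fun ω hω => ?_
  rw [Fintype.prod_bool, mul_comm]

/-- Claim C : `g b` does not depend on slot `(i₀, ¬b)`. -/
lemma gfun_updX_ne {b b' : Bool} (hb : b' ≠ b) (x : Fin r → Bool → G) (t : G) :
    gfun f u k i₀ b (updX x i₀ b' t) = gfun f u k i₀ b x := by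
  unfold gfun
  refine Finset.prod_congr rfl fun ω hω => ?_
  rw [Y_updX_ne x i₀ b' t (by simp [hb.symm])]

/-- Claim C' : `U` does not depend on the `i₀` coordinate. -/
lemma Ufun_updX (b : Bool) (x : Fin r → Bool → G) (t : G) :
    Ufun u k i₀ (updX x i₀ b t) = Ufun u k i₀ x := by
  unfold Ufun
  refine Finset.prod_congr rfl fun ω hω => ?_
  congr 1
  funext j
  exact Y_updX_apply_ne x i₀ b t ω j.2

/-- Claim D : slot symmetry. -/
lemma gfun_slot_symm (x : Fin r → Bool → G) (t : G) :
    gfun f u k i₀ false (updX x i₀ false t) = gfun f u k i₀ true (updX x i₀ true t) := by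
  unfold gfun
  refine Finset.prod_congr rfl fun ω hω => ?_
  have hY : Y (updX x i₀ false t) (Function.update ω i₀ false)
      = Y (updX x i₀ true t) (Function.update ω i₀ true) := by
    funext j
    rcases eq_or_ne j i₀ with rfl | hj
    · simp [Y, updX]
    · simp [Y, updX, Function.update_of_ne hj]
  rw [hY]


lemma updX_comm (x : Fin r → Bool → G) (i₀ : Fin r) {b b' : Bool} (hb : b ≠ b') (t t' : G) :
    updX (updX x i₀ b t) i₀ b' t' = updX (updX x i₀ b' t') i₀ b t := by
  funext j
  rcases eq_or_ne j i₀ with rfl | hj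
  · simp only [updX, Function.update_self, Function.update_idem]
    exact Function.update_comm hb t t' (x j)
  · simp [updX, Function.update_of_ne hj]

/-- The inner sum over the `(i₀, false)` slot. -/
def hfun (k : ℕ) (i₀ : Fin r) (x : Fin r → Bool → G) : ℝ :=
  ∑ t : G, gfun f u k i₀ false (updX x i₀ false t)

lemma hfun_updX (b : Bool) (x : Fin r → Bool → G) (t : G) :
    hfun f u k i₀ (updX x i₀ b t) = hfun f u k i₀ x := by
  unfold hfun
  refine Finset.sum_congr rfl fun t' _ => ?_
  cases b
  · rw [updX_updX]
  · rw [updX_comm x i₀ (by simp) t t', gfun_updX_ne f u (by simp)]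

lemma hfun_def (x : Fin r → Bool → G) :
    hfun f u k i₀ x = ∑ t : G, gfun f u k i₀ false (updX x i₀ false t) := rfl

/-- F1 : `∑ U * h = |G| * ∑ P k`. -/
lemma sum_U_mul_h (hi₀ : (i₀ : ℕ) = k) :
    ∑ x : Fin r → Bool → G, Ufun u k i₀ x * hfun f u k i₀ x
      = (Fintype.card G : ℝ) * ∑ x : Fin r → Bool → G, P f u k x := by
  calc ∑ x : Fin r → Bool → G, Ufun u k i₀ x * hfun f u k i₀ x
      = ∑ x : Fin r → Bool → G, ∑ t : G,
          (fun y => Ufun u k i₀ y * gfun f u k i₀ false y) (updX x i₀ false t) := by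
        refine Finset.sum_congr rfl fun x _ => ?_
        show Ufun u k i₀ x * hfun f u k i₀ x = ∑ t : G,
          Ufun u k i₀ (updX x i₀ false t) * gfun f u k i₀ false (updX x i₀ false t)
        rw [hfun_def, Finset.mul_sum]
        exact Finset.sum_congr rfl fun t _ => by rw [Ufun_updX]
    _ = (Fintype.card G : ℝ) * ∑ x : Fin r → Bool → G,
          (fun y => Ufun u k i₀ y * gfun f u k i₀ false y) x :=
        sum_updX i₀ false (fun y => Ufun u k i₀ y * gfun f u k i₀ false y)
    _ = (Fintype.card G : ℝ) * ∑ x : Fin r → Bool → G, P f u k x := by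
        refine congrArg _ (Finset.sum_congr rfl fun x _ => ?_)
        show Ufun u k i₀ x * gfun f u k i₀ false x = P f u k x
        exact (P_eq_U_mul_g f u hi₀ x).symm

/-- F2 : `∑ h ^ 2 = |G| ^ 2 * ∑ P (k + 1)`. -/
lemma sum_h_sq (hi₀ : (i₀ : ℕ) = k) :
    ∑ x : Fin r → Bool → G, hfun f u k i₀ x ^ 2
      = (Fintype.card G : ℝ) ^ 2 * ∑ x : Fin r → Bool → G, P f u (k+1) x := by
  calc ∑ x : Fin r → Bool → G, hfun f u k i₀ x ^ 2
      = ∑ x : Fin r → Bool → G, ∑ t : G,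
          (fun y => hfun f u k i₀ y * gfun f u k i₀ true y) (updX x i₀ true t) := by
        refine Finset.sum_congr rfl fun x _ => ?_
        show hfun f u k i₀ x ^ 2 = ∑ t : G,
          hfun f u k i₀ (updX x i₀ true t) * gfun f u k i₀ true (updX x i₀ true t)
        have e1 : hfun f u k i₀ x ^ 2
            = ∑ t : G, hfun f u k i₀ x * gfun f u k i₀ false (updX x i₀ false t) := by
          rw [sq]
          nth_rewrite 2 [hfun_def]
          rw [Finset.mul_sum]
        rw [e1]
        refine Finset.sum_congr rfl fun t _ => ?_
        rw [gfun_slot_symm, hfun_updX]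
    _ = (Fintype.card G : ℝ) * ∑ x : Fin r → Bool → G,
          (fun y => hfun f u k i₀ y * gfun f u k i₀ true y) x :=
        sum_updX i₀ true (fun y => hfun f u k i₀ y * gfun f u k i₀ true y)
    _ = (Fintype.card G : ℝ) * ∑ x : Fin r → Bool → G, ∑ t : G,
          (fun y => gfun f u k i₀ false y * gfun f u k i₀ true y) (updX x i₀ false t) := by
        refine congrArg _ (Finset.sum_congr rfl fun x _ => ?_)
        show hfun f u k i₀ x * gfun f u k i₀ true x = ∑ t : G,
          gfun f u k i₀ false (updX x i₀ false t) * gfun f u k i₀ true (updX x i₀ false t)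
        rw [hfun_def, Finset.sum_mul]
        exact Finset.sum_congr rfl fun t _ => by
          rw [gfun_updX_ne f u (show (false : Bool) ≠ true by simp)]
    _ = (Fintype.card G : ℝ) * ((Fintype.card G : ℝ) * ∑ x : Fin r → Bool → G,
          (fun y => gfun f u k i₀ false y * gfun f u k i₀ true y) x) := by
        rw [sum_updX i₀ false (fun y => gfun f u k i₀ false y * gfun f u k i₀ true y)]
    _ = (Fintype.card G : ℝ) ^ 2 * ∑ x : Fin r → Bool → G, P f u (k+1) x := by
        rw [Finset.sum_congr rfl fun (x : Fin r → Bool → G) _ =>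
          ((P_succ_eq_g_mul_g f u hi₀ x).symm :
            (fun y => gfun f u k i₀ false y * gfun f u k i₀ true y) x = P f u (k+1) x)]
        ring

variable [Nonempty G]

lemma Ufun_mem_Icc (hu : ∀ i w, u i w ∈ Set.Icc (0:ℝ) 1) (x : Fin r → Bool → G) :
    Ufun u k i₀ x ∈ Set.Icc (0:ℝ) 1 := by
  constructor
  · exact Finset.prod_nonneg fun ω _ => (hu i₀ _).1
  · exact Finset.prod_le_one (fun ω _ => (hu i₀ _).1) (fun ω _ => (hu i₀ _).2)

/-- The Cauchy–Schwarz step. -/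
lemma step (hu : ∀ i w, u i w ∈ Set.Icc (0:ℝ) 1) (hk : k < r) :
    (∑ x : Fin r → Bool → G, P f u k x) ^ 2
      ≤ (Fintype.card (Fin r → Bool → G) : ℝ) * ∑ x : Fin r → Bool → G, P f u (k+1) x := by
  set i₀ : Fin r := ⟨k, hk⟩ with hi₀def
  have hi₀ : (i₀ : ℕ) = k := rfl
  set c : ℝ := (Fintype.card G : ℝ) with hc
  have hc0 : 0 < c := by
    rw [hc]
    exact_mod_cast Fintype.card_pos
  set N : ℝ := (Fintype.card (Fin r → Bool → G) : ℝ) with hN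
  have hcs := Finset.sum_mul_sq_le_sq_mul_sq Finset.univ
    (fun x : Fin r → Bool → G => Ufun u k i₀ x) (fun x => hfun f u k i₀ x)
  have hU2 : ∑ x : Fin r → Bool → G, Ufun u k i₀ x ^ 2 ≤ N := by
    rw [hN]
    calc ∑ x : Fin r → Bool → G, Ufun u k i₀ x ^ 2
        ≤ ∑ _x : Fin r → Bool → G, (1:ℝ) := by
          refine Finset.sum_le_sum fun x _ => ?_
          have := Ufun_mem_Icc u hu (i₀ := i₀) (k := k) x
          nlinarith [this.1, this.2]
      _ = (Fintype.card (Fin r → Bool → G) : ℝ) := by simp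
  have hh2 : 0 ≤ ∑ x : Fin r → Bool → G, hfun f u k i₀ x ^ 2 :=
    Finset.sum_nonneg fun x _ => sq_nonneg _
  have key : (c * ∑ x : Fin r → Bool → G, P f u k x) ^ 2
      ≤ N * (c ^ 2 * ∑ x : Fin r → Bool → G, P f u (k+1) x) := by
    rw [← sum_U_mul_h f u hi₀, ← sum_h_sq f u hi₀]
    calc (∑ x : Fin r → Bool → G, Ufun u k i₀ x * hfun f u k i₀ x) ^ 2
        ≤ (∑ x : Fin r → Bool → G, Ufun u k i₀ x ^ 2) *
            ∑ x : Fin r → Bool → G, hfun f u k i₀ x ^ 2 := hcs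
      _ ≤ N * ∑ x : Fin r → Bool → G, hfun f u k i₀ x ^ 2 :=
          mul_le_mul_of_nonneg_right hU2 hh2
  have expand : (c * ∑ x : Fin r → Bool → G, P f u k x) ^ 2
      = c ^ 2 * (∑ x : Fin r → Bool → G, P f u k x) ^ 2 := by ring
  rw [expand] at key
  have key2 : c ^ 2 * (∑ x : Fin r → Bool → G, P f u k x) ^ 2
      ≤ c ^ 2 * (N * ∑ x : Fin r → Bool → G, P f u (k+1) x) := by
    calc c ^ 2 * (∑ x : Fin r → Bool → G, P f u k x) ^ 2
        ≤ N * (c ^ 2 * ∑ x : Fin r → Bool → G, P f u (k+1) x) := key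
      _ = c ^ 2 * (N * ∑ x : Fin r → Bool → G, P f u (k+1) x) := by ring
  exact le_of_mul_le_mul_left key2 (by positivity)


/-- Averaged Cauchy–Schwarz step. -/
lemma A_step (hu : ∀ i w, u i w ∈ Set.Icc (0:ℝ) 1) (hk : k < r) :
    ((∑ x : Fin r → Bool → G, P f u k x) / (Fintype.card (Fin r → Bool → G) : ℝ)) ^ 2
      ≤ (∑ x : Fin r → Bool → G, P f u (k+1) x) / (Fintype.card (Fin r → Bool → G) : ℝ) := by
  have hN : (0:ℝ) < (Fintype.card (Fin r → Bool → G) : ℝ) := by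
    exact_mod_cast Fintype.card_pos
  have h := step f u hu hk
  rw [div_pow, div_le_div_iff₀ (by positivity) hN]
  calc (∑ x : Fin r → Bool → G, P f u k x) ^ 2 * (Fintype.card (Fin r → Bool → G) : ℝ)
      ≤ ((Fintype.card (Fin r → Bool → G) : ℝ) * ∑ x : Fin r → Bool → G, P f u (k+1) x) *
          (Fintype.card (Fin r → Bool → G) : ℝ) :=
        mul_le_mul_of_nonneg_right h hN.le
    _ = (∑ x : Fin r → Bool → G, P f u (k+1) x) *
          (Fintype.card (Fin r → Bool → G) : ℝ) ^ 2 := by ring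

/-- Iterated Cauchy–Schwarz. -/
lemma A_pow (hu : ∀ i w, u i w ∈ Set.Icc (0:ℝ) 1) :
    ∀ k, 1 ≤ k → k ≤ r →
      ((∑ x : Fin r → Bool → G, P f u 0 x) / (Fintype.card (Fin r → Bool → G) : ℝ)) ^ (2 ^ k)
        ≤ (∑ x : Fin r → Bool → G, P f u k x) / (Fintype.card (Fin r → Bool → G) : ℝ) := by
  intro k
  induction k with
  | zero => intro h; omega
  | succ k ih =>
    intro _ hk1
    rcases Nat.eq_or_lt_of_le (Nat.one_le_iff_ne_zero.2 (Nat.succ_ne_zero k)) with h1 | h1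
    · -- k = 0
      have hk0 : k = 0 := by omega
      subst hk0
      simpa [pow_one] using A_step f u hu (show 0 < r by omega)
    · -- 1 ≤ k
      have hk : 1 ≤ k := by omega
      have hkr : k ≤ r := by omega
      have ihk := ih hk hkr
      have heven : Even (2 ^ k) := (Nat.even_pow).2 ⟨even_two, by omega⟩
      have h0 : (0:ℝ) ≤ ((∑ x : Fin r → Bool → G, P f u 0 x) /
          (Fintype.card (Fin r → Bool → G) : ℝ)) ^ (2 ^ k) := heven.pow_nonneg _
      calc ((∑ x : Fin r → Bool → G, P f u 0 x) /
            (Fintype.card (Fin r → Bool → G) : ℝ)) ^ (2 ^ (k+1))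
          = (((∑ x : Fin r → Bool → G, P f u 0 x) /
            (Fintype.card (Fin r → Bool → G) : ℝ)) ^ (2 ^ k)) ^ 2 := by
            rw [← pow_mul, pow_succ]
        _ ≤ ((∑ x : Fin r → Bool → G, P f u k x) /
            (Fintype.card (Fin r → Bool → G) : ℝ)) ^ 2 := by
            exact pow_le_pow_left₀ h0 ihk 2
        _ ≤ (∑ x : Fin r → Bool → G, P f u (k+1) x) /
            (Fintype.card (Fin r → Bool → G) : ℝ) := A_step f u hu (by omega)

/-- splitting a double-indexed family into its `false` and `true` parts -/
def splitEquiv : (Fin r → Bool → G) ≃ ((Fin r → G) × (Fin r → G)) where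
  toFun x := (fun i => x i false, fun i => x i true)
  invFun p := fun i b => bif b then p.2 i else p.1 i
  left_inv x := by funext i b; cases b <;> rfl
  right_inv p := rfl

lemma Om_zero : Om r 0 = {fun _ => false} := by
  ext ω
  simp only [Om, mem_filter, mem_univ, true_and, Finset.mem_singleton]
  constructor
  · intro h; funext i; exact h i (Nat.zero_le _)
  · rintro rfl i _; rfl

lemma Hi_zero : Hi r 0 = Finset.univ := by
  simp [Hi]

/-- Endpoint `k = 0`. -/
lemma sum_P_zero :
    ∑ x : Fin r → Bool → G, P f u 0 x
      = (Fintype.card (Fin r → G) : ℝ) *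
        ∑ z : Fin r → G, f z * ∏ i : Fin r, u i fun j => z j.1 := by
  have hP : ∀ x : Fin r → Bool → G,
      P f u 0 x = (fun z : Fin r → G => f z * ∏ i : Fin r, u i fun j => z j.1)
        (fun i => x i false) := by
    intro x
    rw [P, Om_zero, Finset.prod_singleton, Hi_zero]
    rfl
  calc ∑ x : Fin r → Bool → G, P f u 0 x
      = ∑ p : (Fin r → G) × (Fin r → G),
          (fun z : Fin r → G => f z * ∏ i : Fin r, u i fun j => z j.1) p.1 := by
        rw [← Equiv.sum_comp (splitEquiv (G := G) (r := r))
          (fun p => (fun z : Fin r → G => f z * ∏ i : Fin r, u i fun j => z j.1) p.1)]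
        exact Finset.sum_congr rfl fun x _ => hP x
    _ = (Fintype.card (Fin r → G) : ℝ) *
          ∑ z : Fin r → G, f z * ∏ i : Fin r, u i fun j => z j.1 := by
        rw [Fintype.sum_prod_type]
        simp [Finset.sum_const, mul_comm, Finset.mul_sum]

lemma Om_top : Om r r = Finset.univ := by
  ext ω
  simp only [Om, mem_filter, mem_univ, true_and, iff_true]
  intro i hi
  exact absurd i.2 (by omega)

lemma Hi_top : Hi r r = ∅ := by
  ext i
  simp only [Hi, mem_filter, mem_univ, true_and, Finset.notMem_empty, iff_false]
  exact fun h => absurd i.2 (by omega)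

/-- Endpoint `k = r`. -/
lemma sum_P_top :
    ∑ x : Fin r → Bool → G, P f u r x
      = ∑ x : Fin r → Bool → G, ∏ ω : Fin r → Bool, f (Y x ω) := by
  refine Finset.sum_congr rfl fun x _ => ?_
  rw [P, Om_top, Hi_top]
  exact Finset.prod_congr rfl fun ω _ => by rw [Finset.prod_empty, mul_one]

end GCS
end GCS

/-- The Cauchy–Schwarz/Gowers–Cauchy–Schwarz inequality bounding the discrepancy
of `ν − 1` against products of test functions by the `2^r`-th root of the
linear-forms-type average `E[∏_{ω∈{0,1}^r} (ν(ψ(x^{(ω)})) − 1)]`, where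
`x^{(ω)} ∈ G^r` has `i`-th coordinate `(x^{(ω_i)})_i`.  The nonnegativity of
that average is part of the claim. -/
theorem discrepancy_le_rpow_lf {G : Type*} [Fintype G] [AddCommGroup G]
    (r : ℕ) (hr : 0 < r) (ψ : (Fin r → G) →+ G) (hψ : Function.Surjective ψ)
    (ν : G → ℝ)
    (u : (i : Fin r) → ({j : Fin r // j ≠ i} → G) → ℝ)
    (hu : ∀ i w, u i w ∈ Set.Icc (0:ℝ) 1) :
    0 ≤ (∑ x : Bool → Fin r → G, ∏ ω : Fin r → Bool, (ν (ψ (fun i => x (ω i) i)) - 1)) /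
        (Fintype.card (Bool → Fin r → G) : ℝ) ∧
    |(∑ x : Fin r → G, (ν (ψ x) - 1) * ∏ i : Fin r, u i (fun j => x j.1)) /
        (Fintype.card (Fin r → G) : ℝ)| ≤
      ((∑ x : Bool → Fin r → G, ∏ ω : Fin r → Bool, (ν (ψ (fun i => x (ω i) i)) - 1)) /
          (Fintype.card (Bool → Fin r → G) : ℝ)) ^ ((1 : ℝ) / 2 ^ r) := by
  classical
  haveI : Nonempty G := ⟨0⟩
  set f : (Fin r → G) → ℝ := fun z => ν (ψ z) - 1 with hf
  -- the `Bool → Fin r → G` sum equals the `Fin r → Bool → G` sum of `P f u r`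
  have hB : (∑ x : Bool → Fin r → G, ∏ ω : Fin r → Bool, (ν (ψ (fun i => x (ω i) i)) - 1))
      = ∑ x : Fin r → Bool → G, GCS.P f u r x := by
    rw [GCS.sum_P_top]
    exact Fintype.sum_equiv (Equiv.piComm fun (_ : Bool) (_ : Fin r) => G) _ _
      fun x => Finset.prod_congr rfl fun ω _ => rfl
  have hcard : (Fintype.card (Bool → Fin r → G) : ℝ)
      = (Fintype.card (Fin r → Bool → G) : ℝ) := by
    exact_mod_cast Fintype.card_congr (Equiv.piComm fun (_ : Bool) (_ : Fin r) => G)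
  have hcard2 : (Fintype.card (Fin r → Bool → G) : ℝ)
      = (Fintype.card (Fin r → G) : ℝ) * (Fintype.card (Fin r → G) : ℝ) := by
    rw [Fintype.card_congr (GCS.splitEquiv (G := G) (r := r)), Fintype.card_prod]
    push_cast
    ring
  have hM : (0:ℝ) < (Fintype.card (Fin r → G) : ℝ) := by exact_mod_cast Fintype.card_pos
  -- identify the LHS average with `A 0`
  have hA0 : (∑ x : Fin r → G, (ν (ψ x) - 1) * ∏ i : Fin r, u i (fun j => x j.1)) /
        (Fintype.card (Fin r → G) : ℝ)
      = (∑ x : Fin r → Bool → G, GCS.P f u 0 x) / (Fintype.card (Fin r → Bool → G) : ℝ) := by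
    rw [GCS.sum_P_zero, hcard2, mul_div_mul_left _ _ hM.ne']
  -- identify the RHS average with `A r`
  have hAr : (∑ x : Bool → Fin r → G, ∏ ω : Fin r → Bool, (ν (ψ (fun i => x (ω i) i)) - 1)) /
        (Fintype.card (Bool → Fin r → G) : ℝ)
      = (∑ x : Fin r → Bool → G, GCS.P f u r x) / (Fintype.card (Fin r → Bool → G) : ℝ) := by
    rw [hB, hcard]
  have hA := GCS.A_pow f u hu r hr (le_refl r)
  have heven : Even (2 ^ r) := (Nat.even_pow).2 ⟨even_two, by omega⟩
  have h0 : (0:ℝ) ≤ ((∑ x : Fin r → Bool → G, GCS.P f u 0 x) /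
      (Fintype.card (Fin r → Bool → G) : ℝ)) ^ (2 ^ r) := heven.pow_nonneg _
  have hArnn : (0:ℝ) ≤ (∑ x : Fin r → Bool → G, GCS.P f u r x) /
      (Fintype.card (Fin r → Bool → G) : ℝ) := le_trans h0 hA
  constructor
  · rw [hAr]; exact hArnn
  · rw [hA0, hAr]
    set A0 : ℝ := (∑ x : Fin r → Bool → G, GCS.P f u 0 x) /
      (Fintype.card (Fin r → Bool → G) : ℝ) with hA0def
    set Ar : ℝ := (∑ x : Fin r → Bool → G, GCS.P f u r x) /
      (Fintype.card (Fin r → Bool → G) : ℝ) with hArdef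
    have h1 : |A0| ^ (2 ^ r : ℕ) ≤ Ar := by
      rw [pow_abs, abs_of_nonneg h0]
      exact hA
    have h2 : |A0| = (|A0| ^ (2 ^ r : ℕ)) ^ ((1 : ℝ) / 2 ^ r) := by
      rw [← Real.rpow_natCast |A0| (2 ^ r), ← Real.rpow_mul (abs_nonneg _)]
      rw [show ((2 ^ r : ℕ) : ℝ) * ((1 : ℝ) / 2 ^ r) = 1 by push_cast; field_simp]
      rw [Real.rpow_one]
    calc |A0| = (|A0| ^ (2 ^ r : ℕ)) ^ ((1 : ℝ) / 2 ^ r) := h2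
      _ ≤ Ar ^ ((1 : ℝ) / 2 ^ r) :=
          Real.rpow_le_rpow (by positivity) h1 (by positivity)
end

section
/- Fix k ≥ 3. Let N be a positive integer and ν : ℤ/Nℤ → ℝ≥0. Suppose ν satisfies the k-linear forms estimates with error δ, meaning that for every choice of exponents n_{j,ω} ∈ {0,1} (j ∈ [k], ω ∈ {0,1}^{[k]\{j}}), |E[∏_{j=1}^k ∏_{ω∈{0,1}^{[k]\{j}}} ν(∑_{i≠j}(i−j)x_i^{(ω_i)})^{n_{j,ω}} | x_1^{(0)},x_1^{(1)},...,x_k^{(0)},x_k^{(1)} ∈ ℤ/Nℤ] − 1| ≤ δ. Then, with r = k−1 and ψ_1 : (ℤ/Nℤ)^{k−1} → ℤ/Nℤ given by ψ_1(x_2,...,x_k) = ∑_{i=2}^k (i−1)x_i, the quantity E[∏_{ω∈{0,1}^r}(ν(ψ_1(x^{(ω)})) − 1) | x^{(0)},x^{(1)} ∈ (ℤ/Nℤ)^r] is at most 2^{2^r}·δ in absolute value. -/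
/-!
Expanding `∏_ω (ν(ψ₁(x^{(ω)})) - 1)` over the subsets `t` of the cube `{0,1}^{k-1}` writes the
box average as `∑_t (-1)^{|t|} A(tᶜ)`, where `A(S)` averages `∏_{ω ∈ S} ν(ψ₁(x^{(ω)}))`. Each
`A(S)` is a linear forms average (all forms with `j ≠ 1` switched off; the variables `x_1^{(0)},
x_1^{(1)}` then do not occur), so `|A(S) - 1| ≤ δ`. The signs sum to zero, so the main terms
cancel and `2^{2^{k-1}}` errors of size at most `δ` remain.
-/

open Finset

/-- The linear forms average
`E[∏_{j=1}^k ∏_{ω∈{0,1}^{[k]\{j}}} ν(∑_{i≠j}(i−j)x_i^{(ω_i)})^{n_{j,ω}}]`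
over `x_1^{(0)},x_1^{(1)},…,x_k^{(0)},x_k^{(1)} ∈ ℤ/Nℤ`, for a choice of
exponents `n_{j,ω} ∈ {0,1}`. -/
noncomputable def lfAvg (N k : ℕ) [NeZero N] (ν : ZMod N → ℝ)
    (n : (j : Fin k) → ({i : Fin k // i ≠ j} → Bool) → Bool) : ℝ :=
  (∑ x : Fin k → Bool → ZMod N,
      ∏ j : Fin k, ∏ ω : {i : Fin k // i ≠ j} → Bool,
        (ν (∑ i : {i : Fin k // i ≠ j},
            ((i.1.1 : ℤ) - (j.1 : ℤ)) • x i.1 (ω i))) ^ (if n j ω then 1 else 0)) /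
    (Fintype.card (Fin k → Bool → ZMod N) : ℝ)

/-- `ν` satisfies the `k`-linear forms estimates with error `δ`. -/
def SatisfiesLF (N k : ℕ) [NeZero N] (ν : ZMod N → ℝ) (δ : ℝ) : Prop :=
  ∀ n : (j : Fin k) → ({i : Fin k // i ≠ j} → Bool) → Bool, |lfAvg N k ν n - 1| ≤ δ

theorem abs_sum_powerset_neg_one_pow_mul_le {α R : Type*} [CommRing R] [LinearOrder R]
    [IsStrictOrderedRing R] {s : Finset α} (hs : s.Nonempty) (A : Finset α → R) {δ : R}
    (hA : ∀ t ∈ s.powerset, |A t - 1| ≤ δ) :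
    |∑ t ∈ s.powerset, (-1) ^ #t * A t| ≤ 2 ^ #s * δ := by
  have hsigns : ∑ t ∈ s.powerset, ((-1 : R) ^ #t) = 0 := by
    exact_mod_cast sum_powerset_neg_one_pow_card_of_nonempty hs
  have hcentre : ∑ t ∈ s.powerset, (-1) ^ #t * A t = ∑ t ∈ s.powerset, (-1) ^ #t * (A t - 1) := by
    simp only [mul_sub, mul_one, sum_sub_distrib, hsigns, sub_zero]
  calc |∑ t ∈ s.powerset, (-1) ^ #t * A t|
      ≤ ∑ t ∈ s.powerset, |(-1 : R) ^ #t * (A t - 1)| := hcentre ▸ abs_sum_le_sum_abs _ _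
    _ ≤ ∑ _t ∈ s.powerset, δ := sum_le_sum fun t ht => by simpa using hA t ht
    _ = 2 ^ #s * δ := by simp

theorem sum_prod_sub_one_div {β α R : Type*} [Fintype β] [Fintype α] [DecidableEq α] [Field R]
    (f : β → α → R) (c : R) :
    (∑ y, ∏ a, (f y a - 1)) / c
      = ∑ t ∈ univ.powerset, (-1) ^ #t * ((∑ y, ∏ a ∈ univ \ t, f y a) / c) := by
  simp only [prod_sub, prod_const_one, mul_one]
  rw [sum_comm, sum_div]
  simp only [mul_sum, sum_div, mul_div_assoc]

theorem sum_comp_tail_div_card {γ M : Type*} [Fintype γ] [Nonempty γ] [Field M] [CharZero M]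
    {m : ℕ} (g : (Fin m → γ) → M) :
    (∑ x : Fin (m + 1) → γ, g (Fin.tail x)) / Fintype.card (Fin (m + 1) → γ)
      = (∑ y, g y) / Fintype.card (Fin m → γ) := by
  let e := Fin.consEquiv fun _ : Fin (m + 1) => γ
  rw [← e.sum_comp, ← Fintype.card_congr e, Fintype.sum_prod_type, Fintype.card_prod]
  have hcons : ∀ p, Fin.tail (e p) = p.2 := fun _ => rfl
  simp only [hcons, sum_const, card_univ, nsmul_eq_mul, Nat.cast_mul]
  exact mul_div_mul_left _ _ (Nat.cast_ne_zero.mpr Fintype.card_ne_zero)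

section Box

variable {N m : ℕ}

/-- With `0`-based indices the paper's forms `ψ₁(x^{(ω)})` are those with `j = 0`; this pattern
switches on exactly the ones with `ω ∈ S`. -/
def boxPattern (S : Finset (Fin m → Bool)) (j : Fin (m + 1)) (ω : {i // i ≠ j} → Bool) : Bool :=
  decide (j = 0 ∧ ω ∘ finSuccAboveEquiv j ∈ S)

noncomputable def boxAvg [NeZero N] (ν : ZMod N → ℝ) (S : Finset (Fin m → Bool)) : ℝ :=
  (∑ y : Bool → Fin m → ZMod N, ∏ ω ∈ S,
      ν (∑ i : Fin m, ((i.1 + 1 : ℕ) : ZMod N) * y (ω i) i)) /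
    (Fintype.card (Bool → Fin m → ZMod N) : ℝ)

theorem sum_ne_zero_zsmul_eq_sum_tail (x : Fin (m + 1) → Bool → ZMod N)
    (ω : {i : Fin (m + 1) // i ≠ 0} → Bool) :
    ∑ i : {i : Fin (m + 1) // i ≠ 0}, ((i.1.1 : ℤ) - ((0 : Fin (m + 1)).1 : ℤ)) • x i.1 (ω i)
      = ∑ i : Fin m, ((i.1 + 1 : ℕ) : ZMod N) * Fin.tail x i ((ω ∘ finSuccAboveEquiv 0) i) := by
  rw [← (finSuccAboveEquiv 0).sum_comp]
  refine sum_congr rfl fun i _ => ?_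
  simp [finSuccAboveEquiv_apply, Fin.tail, zsmul_eq_mul]

theorem prod_pow_boxPattern (ν : ZMod N → ℝ) (S : Finset (Fin m → Bool))
    (x : Fin (m + 1) → Bool → ZMod N) :
    ∏ j : Fin (m + 1), ∏ ω : {i : Fin (m + 1) // i ≠ j} → Bool,
        ν (∑ i : {i : Fin (m + 1) // i ≠ j}, ((i.1.1 : ℤ) - (j.1 : ℤ)) • x i.1 (ω i)) ^
          (if boxPattern S j ω then 1 else 0)
      = ∏ ω ∈ S, ν (∑ i : Fin m, ((i.1 + 1 : ℕ) : ZMod N) * Fin.tail x i (ω i)) := by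
  rw [prod_eq_single_of_mem 0 (mem_univ _) fun j _ hj => by simp [boxPattern, hj],
    ← Fintype.prod_ite_mem S]
  refine Fintype.prod_equiv ((finSuccAboveEquiv 0).symm.arrowCongr (Equiv.refl Bool)) _ _
    fun ω => ?_
  rw [sum_ne_zero_zsmul_eq_sum_tail]
  have harrow : (finSuccAboveEquiv 0).symm.arrowCongr (Equiv.refl Bool) ω
      = ω ∘ finSuccAboveEquiv 0 := rfl
  by_cases hω : ω ∘ finSuccAboveEquiv 0 ∈ S <;> simp [boxPattern, harrow, hω]

theorem lfAvg_boxPattern [NeZero N] (ν : ZMod N → ℝ) (S : Finset (Fin m → Bool)) :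
    lfAvg N (m + 1) ν (boxPattern S) = boxAvg ν S := by
  rw [lfAvg, boxAvg]
  simp only [prod_pow_boxPattern]
  rw [sum_comp_tail_div_card fun y : Fin m → Bool → ZMod N =>
      ∏ ω ∈ S, ν (∑ i, ((i.1 + 1 : ℕ) : ZMod N) * y i (ω i)),
    ← (Equiv.piComm fun (_ : Bool) (_ : Fin m) => ZMod N).sum_comp,
    Fintype.card_congr (Equiv.piComm fun (_ : Bool) (_ : Fin m) => ZMod N)]
  rfl

end Box

theorem lf_implies_box_small_general (k : ℕ) (hk : 3 ≤ k) (N : ℕ) [NeZero N]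
    (ν : ZMod N → ℝ) (δ : ℝ) (hlf : SatisfiesLF N k ν δ) :
    |(∑ x : Bool → Fin (k - 1) → ZMod N,
        ∏ ω : Fin (k - 1) → Bool,
          (ν (∑ i : Fin (k - 1), ((i.1 + 1 : ℕ) : ZMod N) * x (ω i) i) - 1)) /
      (Fintype.card (Bool → Fin (k - 1) → ZMod N) : ℝ)| ≤ 2 ^ (2 ^ (k - 1)) * δ := by
  obtain ⟨m, rfl⟩ : ∃ m, k = m + 1 := ⟨k - 1, by omega⟩
  have hbox : ∀ S, |boxAvg ν S - 1| ≤ δ := fun S => lfAvg_boxPattern ν S ▸ hlf _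
  have hbound := abs_sum_powerset_neg_one_pow_mul_le univ_nonempty
    (fun t => boxAvg ν (univ \ t)) fun t _ => hbox _
  simp only [Nat.add_sub_cancel]
  rw [sum_prod_sub_one_div]
  rwa [card_univ, Fintype.card_fun, Fintype.card_bool, Fintype.card_fin] at hbound

/-- If `ν` satisfies the `k`-linear forms estimates with error `δ`, then with
`r = k−1` and `ψ₁(x_2,…,x_k) = ∑_{i=2}^k (i−1)x_i`, the average
`E[∏_{ω∈{0,1}^r}(ν(ψ₁(x^{(ω)})) − 1) | x^{(0)},x^{(1)} ∈ (ℤ/Nℤ)^r]`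
is at most `2^{2^r}·δ` in absolute value. -/
theorem lf_implies_box_small (k : ℕ) (hk : 3 ≤ k) (N : ℕ) [NeZero N]
    (ν : ZMod N → ℝ) (hν : ∀ x, 0 ≤ ν x) (δ : ℝ) (hlf : SatisfiesLF N k ν δ) :
    |(∑ x : Bool → Fin (k - 1) → ZMod N,
        ∏ ω : Fin (k - 1) → Bool,
          (ν (∑ i : Fin (k - 1), ((i.1 + 1 : ℕ) : ZMod N) * x (ω i) i) - 1)) /
      (Fintype.card (Bool → Fin (k - 1) → ZMod N) : ℝ)| ≤ 2 ^ (2 ^ (k - 1)) * δ :=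
  lf_implies_box_small_general k hk N ν δ hlf
end

section
/- Fix k ≥ 3 and let N be a positive integer coprime to (k−1)!. For j ∈ [k], define ψ_j : (ℤ/Nℤ)^{k−1} → ℤ/Nℤ (with coordinates indexed by [k]\{j}) by ψ_j(x) = ∑_{i∈[k]\{j}} (i−j)x_i. If g, g' : ℤ/Nℤ → ℝ≥0 and (g, g') is a (k−1, ε)-discrepancy pair with respect to ψ_j for some j ∈ [k], then (g, g') is a (k−1, ε)-discrepancy pair with respect to ψ_{j'} for every j' ∈ [k]. -/
/-!
Each `ψ_j` becomes the plain coordinate sum `x ↦ ∑ i, x i` after rescaling every coordinate by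
the unit `i − j` of `ℤ/Nℤ` (a unit because `0 < |i − j| ≤ k − 1` and `N` is coprime to `(k−1)!`),
and the coordinate sums on `[k]∖{j}` and `[k]∖{j'}` differ only by a relabelling of coordinates.
Neither a relabelling of the coordinates nor a bijection applied to each coordinate separately
changes the class of test-function products, so all these forms have the same discrepancy pairs.
-/

open Finset

/-- `(f, f')` is an `(ι, ε)`-discrepancy pair with respect to `ψ : G^ι → G`:
`|E[(f(ψ(x)) − f'(ψ(x))) ∏_{i∈ι} u_i(x_{ι\{i}}) | x ∈ G^ι]| ≤ ε` for all
`[0,1]`-valued test functions `u_i`. -/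
def DiscPairOn {G : Type*} [Fintype G] [AddCommGroup G]
    (ι : Type*) [Fintype ι] [DecidableEq ι]
    (ψ : (ι → G) → G) (f f' : G → ℝ) (ε : ℝ) : Prop :=
  ∀ u : (i : ι) → ({j : ι // j ≠ i} → G) → ℝ,
    (∀ i w, u i w ∈ Set.Icc (0:ℝ) 1) →
    |(∑ x : ι → G, (f (ψ x) - f' (ψ x)) * ∏ i : ι, u i (fun j => x j.1)) /
        (Fintype.card (ι → G) : ℝ)| ≤ ε

/-- `ψ_j(x) = ∑_{i∈[k]\{j}} (i−j)x_i` on `(ℤ/Nℤ)^{[k]\{j}}`. -/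
def psiZ (N k : ℕ) (j : Fin k) (x : {i : Fin k // i ≠ j} → ZMod N) : ZMod N :=
  ∑ i : {i : Fin k // i ≠ j}, ((i.1.1 : ℤ) - (j.1 : ℤ)) • x i

section DiscPairOn

variable {G ι κ : Type*} [Fintype G] [AddCommGroup G]
  [Fintype ι] [DecidableEq ι] [Fintype κ] [DecidableEq κ]
  {f f' : G → ℝ} {ε : ℝ}

theorem DiscPairOn.of_relabel {ψ : (κ → G) → G} {ψ' : (ι → G) → G}
    (e : ι ≃ κ) (σ : κ → Equiv.Perm G) (hψ : ∀ x, ψ (fun s => σ s (x (e.symm s))) = ψ' x)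
    (h : DiscPairOn κ ψ f f' ε) : DiscPairOn ι ψ' f f' ε := by
  intro u hu
  let Φ : (ι → G) ≃ (κ → G) := (e.arrowCongr (Equiv.refl G)).trans (Equiv.piCongrRight σ)
  have hΦ : ∀ x s, Φ x s = σ s (x (e.symm s)) := fun _ _ => rfl
  -- the test function of `Φ x` at coordinate `s` is `u (e.symm s)` read back through `Φ⁻¹`
  let U : (s : κ) → ({l : κ // l ≠ s} → G) → ℝ := fun s w =>
    u (e.symm s) fun m => (σ (e m.1)).symm (w ⟨e m.1, fun hm => m.2 (by simp [← hm])⟩)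
  have hprod : ∀ x, ∏ s, U s (fun l => Φ x l.1) = ∏ i, u i (fun m => x m.1) := fun x =>
    Fintype.prod_equiv e.symm _ _ fun s => by simp only [U, hΦ, Equiv.symm_apply_apply]
  have hsum : ∑ x : ι → G, (f (ψ' x) - f' (ψ' x)) * ∏ i, u i (fun m => x m.1)
      = ∑ y : κ → G, (f (ψ y) - f' (ψ y)) * ∏ s, U s (fun l => y l.1) :=
    Fintype.sum_equiv Φ _ _ fun x => by rw [hprod, ← hψ x]; rfl
  rw [hsum, Fintype.card_congr Φ]
  exact h U fun s w => hu _ _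

theorem DiscPairOn.sum_of_equiv (e : ι ≃ κ)
    (h : DiscPairOn κ (fun y => ∑ s, y s) f f' ε) :
    DiscPairOn ι (fun x => ∑ i, x i) f f' ε :=
  h.of_relabel e (fun _ => Equiv.refl G) fun x => e.symm.sum_comp x

end DiscPairOn

section PsiZ

variable {N k : ℕ}

theorem isUnit_sub_of_coprime_factorial (hN : N.Coprime (k - 1).factorial)
    {a b : Fin k} (hab : a ≠ b) : IsUnit (((a : ℤ) - b : ℤ) : ZMod N) := by
  have hne : (a : ℤ) - b ≠ 0 := fun h => hab (Fin.ext (by omega))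
  have hdvd : ((a : ℤ) - b) ∣ ((k - 1).factorial : ℤ) :=
    Int.natAbs_dvd.mp (Int.natCast_dvd_natCast.mpr
      (Nat.dvd_factorial (by omega) (by have := a.2; have := b.2; omega)))
  refine isUnit_of_dvd_unit (map_dvd (Int.castRingHom (ZMod N)) hdvd) ?_
  simpa using (ZMod.isUnit_iff_coprime _ N).mpr hN.symm

/-- The coefficient `i − j` of `ψ_j`, as a unit of `ℤ/Nℤ`. -/
noncomputable def psiCoeff (hN : N.Coprime (k - 1).factorial) (j : Fin k)
    (i : {i : Fin k // i ≠ j}) : (ZMod N)ˣ :=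
  (isUnit_sub_of_coprime_factorial hN i.2).unit

theorem psiZ_eq_sum_psiCoeff_mul (hN : N.Coprime (k - 1).factorial) (j : Fin k)
    (x : {i : Fin k // i ≠ j} → ZMod N) :
    psiZ N k j x = ∑ i, (psiCoeff hN j i : ZMod N) * x i := by
  simp [psiZ, psiCoeff, zsmul_eq_mul]

theorem discPairOn_psiZ_iff [NeZero N] (hN : N.Coprime (k - 1).factorial) (j : Fin k)
    {f f' : ZMod N → ℝ} {ε : ℝ} :
    DiscPairOn {i : Fin k // i ≠ j} (psiZ N k j) f f' ε ↔
      DiscPairOn {i : Fin k // i ≠ j} (fun x => ∑ i, x i) f f' ε := by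
  constructor
  · refine fun h => h.of_relabel (Equiv.refl _) (fun i => (psiCoeff hN j i)⁻¹.mulLeft) ?_
    simp [psiZ_eq_sum_psiCoeff_mul hN]
  · refine fun h => h.of_relabel (Equiv.refl _) (fun i => (psiCoeff hN j i).mulLeft) ?_
    simp [psiZ_eq_sum_psiCoeff_mul hN]

end PsiZ

theorem discPair_psi_invariant_general (k : ℕ) (N : ℕ) [NeZero N]
    (hN : Nat.Coprime N (Nat.factorial (k - 1)))
    (g g' : ZMod N → ℝ) (ε : ℝ)
    (j : Fin k) (h : DiscPairOn {i : Fin k // i ≠ j} (psiZ N k j) g g' ε) :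
    ∀ j' : Fin k, DiscPairOn {i : Fin k // i ≠ j'} (psiZ N k j') g g' ε := by
  intro j'
  let e : {i : Fin k // i ≠ j'} ≃ {i : Fin k // i ≠ j} :=
    (Equiv.swap j' j).subtypeEquiv fun i =>
      ((Equiv.swap j' j).injective.ne_iff' (Equiv.swap_apply_left j' j)).symm
  exact (discPairOn_psiZ_iff hN j').mpr (((discPairOn_psiZ_iff hN j).mp h).sum_of_equiv e)

/-- If `N` is coprime to `(k−1)!` and `(g, g')` is a `(k−1, ε)`-discrepancy pair with
respect to `ψ_j` for some `j ∈ [k]`, then it is a `(k−1, ε)`-discrepancy pair with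
respect to `ψ_{j'}` for every `j' ∈ [k]`. -/
theorem discPair_psi_invariant (k : ℕ) (hk : 3 ≤ k) (N : ℕ) [NeZero N]
    (hN : Nat.Coprime N (Nat.factorial (k - 1)))
    (g g' : ZMod N → ℝ) (hg : ∀ x, 0 ≤ g x) (hg' : ∀ x, 0 ≤ g' x) (ε : ℝ)
    (j : Fin k) (h : DiscPairOn {i : Fin k // i ≠ j} (psiZ N k j) g g' ε) :
    ∀ j' : Fin k, DiscPairOn {i : Fin k // i ≠ j'} (psiZ N k j') g g' ε :=
  discPair_psi_invariant_general k N hN g g' ε j h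
end
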